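/- Let C_S be a real symmetric positive definite d×d matrix and C_T a real symmetric positive semidefinite d×d matrix with spectral decomposition C_T = U_T Σ_T U_Tᵀ, eigenvalues λ₁ ≥ … ≥ λ_d ≥ 0. Then the minimum over all real d×d matrices A of ‖Aᵀ C_S A − C_T‖²_F equals 0, and it is attained at A = C_S^{-1/2} C_T^{1/2}; more generally, for any r ≤ rank(C_T), the matrix A_r = C_S^{-1/2} U_T[1:r] Σ_T[1:r]^{1/2} U_T[1:r]ᵀ attains the minimum of ‖Aᵀ C_S A − C_T‖²_F over all matrices A with rank(A) ≤ r, with minimum value Σ_{i>r} λᵢ². -/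

import Mathlib

open Matrix BigOperators

/-- Squared Frobenius norm of a real matrix: sum of squares of all entries. -/
noncomputable def frobSq {m n : ℕ} (M : Matrix (Fin m) (Fin n) ℝ) : ℝ :=
  ∑ i, ∑ j, (M i j) ^ 2

section Aux

variable {d : ℕ}

lemma frobSq_eq_trace (M : Matrix (Fin d) (Fin d) ℝ) : frobSq M = (Mᵀ * M).trace := by
  simp only [frobSq, Matrix.trace, Matrix.diag, Matrix.mul_apply, Matrix.transpose_apply, sq]
  exact Finset.sum_comm

lemma frobSq_nonneg (M : Matrix (Fin d) (Fin d) ℝ) : 0 ≤ frobSq M :=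
  Finset.sum_nonneg fun _ _ => Finset.sum_nonneg fun _ _ => sq_nonneg _

lemma frobSq_conj (O M : Matrix (Fin d) (Fin d) ℝ) (hO : Oᵀ * O = 1) :
    frobSq (O * M * Oᵀ) = frobSq M := by
  rw [frobSq_eq_trace, frobSq_eq_trace]
  have key : (O * M * Oᵀ)ᵀ * (O * M * Oᵀ) = O * (Mᵀ * M) * Oᵀ := by
    simp only [Matrix.transpose_mul, Matrix.transpose_transpose, Matrix.mul_assoc]
    rw [← Matrix.mul_assoc Oᵀ O, hO, Matrix.one_mul]
  rw [key, Matrix.trace_mul_cycle, ← Matrix.mul_assoc, hO, Matrix.one_mul]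

lemma frobSq_diagonal (v : Fin d → ℝ) : frobSq (Matrix.diagonal v) = ∑ i, v i ^ 2 := by
  unfold frobSq
  refine Finset.sum_congr rfl fun i _ => ?_
  have : ∀ j, (Matrix.diagonal v i j) ^ 2 = if i = j then v i ^ 2 else 0 := by
    intro j
    by_cases h : i = j
    · subst h; simp
    · simp [Matrix.diagonal_apply_ne _ h, h]
  simp [this]

lemma conj_mul_conj (V : Matrix (Fin d) (Fin d) ℝ) (h : Vᵀ * V = 1) (a b : Fin d → ℝ) :
    (V * Matrix.diagonal a * Vᵀ) * (V * Matrix.diagonal b * Vᵀ)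
      = V * Matrix.diagonal (fun i => a i * b i) * Vᵀ := by
  calc (V * Matrix.diagonal a * Vᵀ) * (V * Matrix.diagonal b * Vᵀ)
      = V * (Matrix.diagonal a * ((Vᵀ * V) * (Matrix.diagonal b * Vᵀ))) := by
        simp only [Matrix.mul_assoc]
    _ = V * (Matrix.diagonal a * Matrix.diagonal b) * Vᵀ := by
        rw [h, Matrix.one_mul]; simp only [Matrix.mul_assoc]
    _ = V * Matrix.diagonal (fun i => a i * b i) * Vᵀ := by
        rw [Matrix.diagonal_mul_diagonal]

lemma trace_mul_diagonal' (M : Matrix (Fin d) (Fin d) ℝ) (w : Fin d → ℝ) :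
    (M * Matrix.diagonal w).trace = ∑ i, M i i * w i := by
  simp only [Matrix.trace, Matrix.diag, Matrix.mul_apply, Matrix.diagonal_apply, mul_ite,
    mul_zero]
  refine Finset.sum_congr rfl fun i _ => ?_
  simp [Finset.sum_ite_eq' Finset.univ i (fun j => M i j * w j)]

lemma psd_diag_nonneg {M : Matrix (Fin d) (Fin d) ℝ} (hM : M.PosSemidef) (i : Fin d) :
    0 ≤ M i i := by
  simpa using hM.2 (Finsupp.single i 1)

lemma card_filter_lt_le (r : ℕ) :
    ((Finset.univ : Finset (Fin d)).filter fun i : Fin d => (i : ℕ) < r).card ≤ r := by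
  classical
  calc ((Finset.univ : Finset (Fin d)).filter fun i : Fin d => (i : ℕ) < r).card
      ≤ (Finset.range r).card :=
        Finset.card_le_card_of_injOn (fun i : Fin d => (i : ℕ))
          (fun i hi => Finset.mem_range.mpr (Finset.mem_filter.mp hi).2)
          (fun a _ b _ h => Fin.ext h)
    _ = r := Finset.card_range r

lemma card_filter_lt_eq {r : ℕ} (h : r ≤ d) :
    ((Finset.univ : Finset (Fin d)).filter fun i : Fin d => (i : ℕ) < r).card = r := by
  classical
  have : ((Finset.univ : Finset (Fin d)).filter fun i : Fin d => (i : ℕ) < r)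
      = (Finset.univ : Finset (Fin r)).map ⟨Fin.castLE h, Fin.castLE_injective h⟩ := by
    ext i
    simp only [Finset.mem_filter, Finset.mem_univ, true_and, Finset.mem_map,
      Function.Embedding.coeFn_mk]
    constructor
    · intro hi; exact ⟨⟨(i : ℕ), hi⟩, by ext; simp [Fin.castLE]⟩
    · rintro ⟨a, rfl⟩; exact a.isLt
  rw [this, Finset.card_map, Finset.card_univ, Fintype.card_fin]

lemma scalar_bound {r : ℕ} (μ t : Fin d → ℝ)
    (hdec : ∀ i j : Fin d, i ≤ j → μ j ≤ μ i) (hpos : ∀ i, 0 ≤ μ i)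
    (ht0 : ∀ i, 0 ≤ t i) (ht1 : ∀ i, t i ≤ 1) (hts : ∑ i, t i ≤ (r : ℝ)) :
    ∑ i, μ i * t i ≤ ∑ i ∈ Finset.univ.filter (fun i : Fin d => (i : ℕ) < r), μ i := by
  by_cases hrd : d ≤ r
  · have hfilter : ((Finset.univ : Finset (Fin d)).filter fun i : Fin d => (i : ℕ) < r)
        = Finset.univ := Finset.filter_true_of_mem fun i _ => lt_of_lt_of_le i.isLt hrd
    rw [hfilter]
    exact Finset.sum_le_sum fun i _ => mul_le_of_le_one_right (hpos i) (ht1 i)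
  · push_neg at hrd
    have hc0 : 0 ≤ μ ⟨r, hrd⟩ := hpos _
    have hptwise : ∀ i : Fin d, μ i * t i
        ≤ (if (i : ℕ) < r then μ i else 0)
          + (μ ⟨r, hrd⟩ * t i - μ ⟨r, hrd⟩ * (if (i : ℕ) < r then 1 else 0)) := by
      intro i
      by_cases h : (i : ℕ) < r
      · have hμc : μ ⟨r, hrd⟩ ≤ μ i := hdec i ⟨r, hrd⟩ (by simpa [Fin.le_def] using h.le)
        simp only [if_pos h, mul_one]
        nlinarith [ht1 i, ht0 i]
      · have hμc : μ i ≤ μ ⟨r, hrd⟩ :=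
          hdec ⟨r, hrd⟩ i (by simpa [Fin.le_def] using not_lt.mp h)
        simp only [if_neg h, mul_zero, sub_zero, zero_add]
        exact mul_le_mul_of_nonneg_right hμc (ht0 i)
    have hind : ∑ i : Fin d, (if (i : ℕ) < r then (1 : ℝ) else 0) = (r : ℝ) := by
      rw [Finset.sum_boole, card_filter_lt_eq hrd.le]
    calc ∑ i, μ i * t i
        ≤ ∑ i : Fin d, ((if (i : ℕ) < r then μ i else 0)
            + (μ ⟨r, hrd⟩ * t i - μ ⟨r, hrd⟩ * (if (i : ℕ) < r then 1 else 0))) :=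
          Finset.sum_le_sum fun i _ => hptwise i
      _ = (∑ i : Fin d, if (i : ℕ) < r then μ i else 0)
            + (μ ⟨r, hrd⟩ * ∑ i, t i
              - μ ⟨r, hrd⟩ * ∑ i : Fin d, (if (i : ℕ) < r then (1 : ℝ) else 0)) := by
          rw [Finset.sum_add_distrib, Finset.sum_sub_distrib, Finset.mul_sum, Finset.mul_sum]
      _ ≤ (∑ i : Fin d, if (i : ℕ) < r then μ i else 0) + 0 := by
          have h1 : μ ⟨r, hrd⟩ * ∑ i, t i ≤ μ ⟨r, hrd⟩ * (r : ℝ) :=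
            mul_le_mul_of_nonneg_left hts hc0
          rw [hind]
          linarith
      _ = ∑ i ∈ Finset.univ.filter (fun i : Fin d => (i : ℕ) < r), μ i := by
          rw [add_zero, Finset.sum_filter]

lemma lower_bound (UT : Matrix (Fin d) (Fin d) ℝ) (lam : Fin d → ℝ)
    (hUT : UTᵀ * UT = 1)
    (hdec : ∀ i j : Fin d, i ≤ j → lam j ≤ lam i) (hnonneg : ∀ i, 0 ≤ lam i)
    (r : ℕ) (P : Matrix (Fin d) (Fin d) ℝ) (hP : P.PosSemidef) (hPr : P.rank ≤ r) :
    ∑ i ∈ Finset.univ.filter (fun i : Fin d => r ≤ (i : ℕ)), (lam i) ^ 2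
      ≤ frobSq (P - UT * Matrix.diagonal lam * UTᵀ) := by
  classical
  have hUT2 : UT * UTᵀ = 1 := mul_eq_one_comm.mp hUT
  set T := UT * Matrix.diagonal lam * UTᵀ with hT
  clear_value T
  have hH : P.IsHermitian := hP.1
  set V : Matrix (Fin d) (Fin d) ℝ := (hH.eigenvectorUnitary : Matrix (Fin d) (Fin d) ℝ)
    with hVdef
  set ν : Fin d → ℝ := hH.eigenvalues with hν
  have hV1 : Vᵀ * V = 1 := by
    have := (Matrix.mem_unitaryGroup_iff').mp hH.eigenvectorUnitary.2
    rwa [Matrix.star_eq_conjTranspose, Matrix.conjTranspose_eq_transpose_of_trivial] at this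
  have hV2 : V * Vᵀ = 1 := mul_eq_one_comm.mp hV1
  have hspec : P = V * Matrix.diagonal ν * Vᵀ := by
    have h := hH.spectral_theorem
    rwa [Unitary.conjStarAlgAut_apply, Matrix.star_eq_conjTranspose, Matrix.conjTranspose_eq_transpose_of_trivial,
      show (RCLike.ofReal ∘ hH.eigenvalues : Fin d → ℝ) = ν from rfl] at h
  have hrank : P.rank = Fintype.card {i // ν i ≠ 0} := hH.rank_eq_card_non_zero_eigs
  clear_value V ν
  set e : Fin d → ℝ := fun i => if ν i = 0 then 0 else 1 with he
  set Pr : Matrix (Fin d) (Fin d) ℝ := V * Matrix.diagonal e * Vᵀ with hPrdef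
  have hee : (fun i => e i * e i) = e := by
    funext i; by_cases h : ν i = 0 <;> simp [he, h]
  have heν : (fun i => e i * ν i) = ν := by
    funext i; by_cases h : ν i = 0 <;> simp [he, h]
  have hPP : Pr * Pr = Pr := by rw [hPrdef, conj_mul_conj V hV1, hee]
  have hPrP : Pr * P = P := by rw [hPrdef, hspec, conj_mul_conj V hV1, heν]
  have hPrT : Prᵀ = Pr := by
    rw [hPrdef]
    simp only [Matrix.transpose_mul, Matrix.transpose_transpose, Matrix.diagonal_transpose,
      Matrix.mul_assoc]
  have hPrPSD : Pr.PosSemidef := by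
    have h0 : (Matrix.diagonal e).PosSemidef := Matrix.PosSemidef.diagonal
      (fun i => by by_cases h : ν i = 0 <;> simp [he, h])
    have h1 := h0.mul_mul_conjTranspose_same V
    rwa [Matrix.conjTranspose_eq_transpose_of_trivial, ← hPrdef] at h1
  have h1PrPSD : (1 - Pr).PosSemidef := by
    have heq : 1 - Pr = V * Matrix.diagonal (fun i => 1 - e i) * Vᵀ := by
      have hd : Matrix.diagonal (fun i : Fin d => 1 - e i)
          = 1 - Matrix.diagonal e := by
        rw [← Matrix.diagonal_one, ← Matrix.diagonal_sub]
      rw [hd, Matrix.mul_sub, Matrix.mul_one, Matrix.sub_mul, hV2, hPrdef]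
    have h0 : (Matrix.diagonal (fun i : Fin d => 1 - e i)).PosSemidef :=
      Matrix.PosSemidef.diagonal
        (fun i => by by_cases h : ν i = 0 <;> simp [he, h])
    have h1 := h0.mul_mul_conjTranspose_same V
    rwa [Matrix.conjTranspose_eq_transpose_of_trivial, ← heq] at h1
  have htracePr : Pr.trace = (P.rank : ℝ) := by
    rw [hPrdef, Matrix.trace_mul_cycle, hV1, Matrix.one_mul, Matrix.trace_diagonal]
    have htr : ∑ i, e i = ((Finset.univ.filter fun i => ¬ ν i = 0).card : ℝ) := by
      rw [Finset.card_filter]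
      push_cast
      refine Finset.sum_congr rfl fun i _ => ?_
      by_cases h : ν i = 0 <;> simp [he, h]
    rw [htr, hrank]
    congr 1
    rw [Fintype.card_subtype]
  clear_value Pr
  clear hPrdef he hspec hee heν hV1 hV2
  have htracePr_le : Pr.trace ≤ (r : ℝ) := by
    rw [htracePr]; exact_mod_cast hPr
  -- diagonal entries t i
  set t : Fin d → ℝ := fun i => (UTᵀ * Pr * UT) i i with ht
  have hconjPSD : (UTᵀ * Pr * UT).PosSemidef := by
    have h1 := hPrPSD.conjTranspose_mul_mul_same UT
    rwa [Matrix.conjTranspose_eq_transpose_of_trivial] at h1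
  have ht0 : ∀ i, 0 ≤ t i := fun i => psd_diag_nonneg hconjPSD i
  have ht1 : ∀ i, t i ≤ 1 := by
    intro i
    have h1 : (UTᵀ * (1 - Pr) * UT).PosSemidef := by
      have h2 := h1PrPSD.conjTranspose_mul_mul_same UT
      rwa [Matrix.conjTranspose_eq_transpose_of_trivial] at h2
    have h2 : (UTᵀ * (1 - Pr) * UT) = 1 - UTᵀ * Pr * UT := by
      rw [Matrix.mul_sub, Matrix.mul_one, Matrix.sub_mul, hUT]
    have h3 := psd_diag_nonneg h1 i
    rw [h2] at h3
    have hone : (1 : Matrix (Fin d) (Fin d) ℝ) i i = 1 := Matrix.one_apply_eq i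
    simp only [Matrix.sub_apply, hone] at h3
    have : t i = (UTᵀ * Pr * UT) i i := rfl
    linarith
  have hts : ∑ i, t i ≤ (r : ℝ) := by
    have h1 : ∑ i, t i = (UTᵀ * Pr * UT).trace := rfl
    rw [h1, Matrix.trace_mul_cycle, hUT2, Matrix.one_mul]
    exact htracePr_le
  -- symmetry of T and X
  have hTsym : Tᵀ = T := by
    rw [hT]
    simp only [Matrix.transpose_mul, Matrix.transpose_transpose, Matrix.diagonal_transpose,
      Matrix.mul_assoc]
  have hPsym : Pᵀ = P := by
    have h1 := hH.eq
    rwa [Matrix.conjTranspose_eq_transpose_of_trivial] at h1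
  set X := P - T with hX
  have hXsym : Xᵀ = X := by rw [hX, Matrix.transpose_sub, hPsym, hTsym]
  clear_value X
  -- decomposition
  have hdecomp : X * X = X * Pr * X + X * (1 - Pr) * X := by noncomm_ring
  have hterm1 : 0 ≤ (X * Pr * X).trace := by
    have heq : (Pr * X)ᵀ * (Pr * X) = X * Pr * X := by
      calc (Pr * X)ᵀ * (Pr * X) = X * Pr * (Pr * X) := by
            rw [Matrix.transpose_mul, hXsym, hPrT]
        _ = X * (Pr * Pr) * X := by noncomm_ring
        _ = X * Pr * X := by rw [hPP]
    rw [← heq, ← frobSq_eq_trace]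
    exact frobSq_nonneg _
  -- second term equals T (1-Pr) T
  have hzero : (1 - Pr) * P = 0 := by
    rw [Matrix.sub_mul, Matrix.one_mul, hPrP, sub_self]
  have hstep : (1 - Pr) * X = -((1 - Pr) * T) := by
    rw [hX, Matrix.mul_sub, hzero, zero_sub]
  have hproj2 : (1 - Pr) * (1 - Pr) = 1 - Pr := by
    have hexp : (1 - Pr) * (1 - Pr) = 1 - Pr - Pr + Pr * Pr := by noncomm_ring
    rw [hexp, hPP]
    abel
  have h1PrT : (1 - Pr)ᵀ = 1 - Pr := by
    rw [Matrix.transpose_sub, Matrix.transpose_one, hPrT]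
  have hterm2 : X * (1 - Pr) * X = T * (1 - Pr) * T := by
    have e1 : ((1 - Pr) * X)ᵀ * ((1 - Pr) * X) = X * (1 - Pr) * X := by
      calc ((1 - Pr) * X)ᵀ * ((1 - Pr) * X) = X * (1 - Pr) * ((1 - Pr) * X) := by
            rw [Matrix.transpose_mul, hXsym, h1PrT]
        _ = X * ((1 - Pr) * (1 - Pr)) * X := by noncomm_ring
        _ = X * (1 - Pr) * X := by rw [hproj2]
    have e2 : ((1 - Pr) * T)ᵀ * ((1 - Pr) * T) = T * (1 - Pr) * T := by
      calc ((1 - Pr) * T)ᵀ * ((1 - Pr) * T) = T * (1 - Pr) * ((1 - Pr) * T) := by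
            rw [Matrix.transpose_mul, hTsym, h1PrT]
        _ = T * ((1 - Pr) * (1 - Pr)) * T := by noncomm_ring
        _ = T * (1 - Pr) * T := by rw [hproj2]
    rw [← e1, hstep, Matrix.transpose_neg, Matrix.neg_mul, Matrix.mul_neg, neg_neg, e2]
  -- compute trace of T (1 - Pr) T
  have hTT : T * T = UT * Matrix.diagonal (fun i => lam i * lam i) * UTᵀ := by
    rw [hT, conj_mul_conj UT hUT]
  have htraceTT : (T * T).trace = ∑ i, lam i ^ 2 := by
    rw [hTT, Matrix.trace_mul_cycle, hUT, Matrix.one_mul, Matrix.trace_diagonal]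
    exact Finset.sum_congr rfl fun i _ => (pow_two (lam i)).symm
  have htracePrTT : (Pr * (T * T)).trace = ∑ i, (lam i ^ 2) * t i := by
    rw [hTT, ← Matrix.mul_assoc, ← Matrix.mul_assoc,
      Matrix.trace_mul_cycle (Pr * UT) (Matrix.diagonal fun i => lam i * lam i) UTᵀ,
      ← Matrix.mul_assoc, trace_mul_diagonal']
    refine Finset.sum_congr rfl fun i _ => ?_
    have h1 : t i = (UTᵀ * Pr * UT) i i := rfl
    rw [h1, pow_two]
    ring
  have htraceT1PrT : (T * (1 - Pr) * T).trace = ∑ i, lam i ^ 2 - ∑ i, (lam i ^ 2) * t i := by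
    have h1 : T * (1 - Pr) * T = T * T - T * Pr * T := by noncomm_ring
    rw [h1, Matrix.trace_sub, htraceTT]
    congr 1
    rw [Matrix.mul_assoc T Pr T, Matrix.trace_mul_comm T (Pr * T), Matrix.mul_assoc, htracePrTT]
  -- scalar bound
  have hscalar : ∑ i, (lam i ^ 2) * t i
      ≤ ∑ i ∈ Finset.univ.filter (fun i : Fin d => (i : ℕ) < r), lam i ^ 2 := by
    refine scalar_bound _ t (fun i j hij => ?_) (fun i => sq_nonneg _) ht0 ht1 hts
    exact pow_le_pow_left₀ (hnonneg j) (hdec i j hij) 2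
  have hsumsplit : ∑ i, lam i ^ 2
      = ∑ i ∈ Finset.univ.filter (fun i : Fin d => (i : ℕ) < r), lam i ^ 2
        + ∑ i ∈ Finset.univ.filter (fun i : Fin d => r ≤ (i : ℕ)), lam i ^ 2 := by
    rw [← Finset.sum_filter_add_sum_filter_not Finset.univ (fun i : Fin d => (i : ℕ) < r)]
    congr 1
    refine Finset.sum_congr (Finset.filter_congr fun i _ => ?_) fun _ _ => rfl
    simp [not_lt]
  -- put it together
  have hfrob : frobSq X = (X * Pr * X).trace + (T * (1 - Pr) * T).trace := by
    rw [frobSq_eq_trace, hXsym, hdecomp, Matrix.trace_add, hterm2]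
  rw [hfrob, htraceT1PrT]
  linarith [hterm1, hscalar, hsumsplit]

end Aux

/-- Let `C_S` be symmetric positive definite with symmetric positive definite square root `R`
(so `C_S^{-1/2} = R⁻¹`), and let `C_T` be symmetric positive semidefinite with symmetric
positive semidefinite square root `Q` (so `C_T^{1/2} = Q`) and spectral decomposition
`C_T = U_T Σ_T U_Tᵀ`, eigenvalues `λ₀ ≥ … ≥ λ_{d-1} ≥ 0`. Then the minimum over all `A` of
`‖Aᵀ C_S A − C_T‖²_F` is `0`, attained at `A = C_S^{-1/2} C_T^{1/2}`; more generally, for any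
`r ≤ rank C_T`, the matrix `A_r = C_S^{-1/2} U_T[1:r] Σ_T[1:r]^{1/2} U_T[1:r]ᵀ` has rank at
most `r` and attains the minimum of `‖Aᵀ C_S A − C_T‖²_F` over all `A` of rank at most `r`,
the minimum value being `∑_{i ≥ r} λᵢ²`. -/
theorem coral_minimum_full_and_rank_constrained
    {d : ℕ} (CS CT R Q UT : Matrix (Fin d) (Fin d) ℝ) (lam : Fin d → ℝ)
    (hCS : CS.PosDef) (hCT : CT.PosSemidef)
    (hR : R.PosDef) (hRsq : R * R = CS)
    (hQ : Q.PosSemidef) (hQsq : Q * Q = CT)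
    (hUT : UTᵀ * UT = 1)
    (hdec : ∀ i j : Fin d, i ≤ j → lam j ≤ lam i) (hnonneg : ∀ i, 0 ≤ lam i)
    (hTspec : CT = UT * Matrix.diagonal lam * UTᵀ) :
    (IsLeast {c : ℝ | ∃ A : Matrix (Fin d) (Fin d) ℝ, c = frobSq (Aᵀ * CS * A - CT)} 0 ∧
      frobSq ((R⁻¹ * Q)ᵀ * CS * (R⁻¹ * Q) - CT) = 0) ∧
    ∀ r : ℕ, r ≤ CT.rank →
      ∀ Ar : Matrix (Fin d) (Fin d) ℝ,
        Ar = R⁻¹ *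
          (UT * Matrix.diagonal (fun i : Fin d => if (i : ℕ) < r then Real.sqrt (lam i) else 0)
            * UTᵀ) →
        Ar.rank ≤ r ∧
        frobSq (Arᵀ * CS * Ar - CT) =
          ∑ i ∈ Finset.univ.filter (fun i : Fin d => r ≤ (i : ℕ)), (lam i) ^ 2 ∧
        IsLeast {c : ℝ | ∃ A : Matrix (Fin d) (Fin d) ℝ, A.rank ≤ r ∧
            c = frobSq (Aᵀ * CS * A - CT)}
          (∑ i ∈ Finset.univ.filter (fun i : Fin d => r ≤ (i : ℕ)), (lam i) ^ 2) := by
  classical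
  have hRsym : Rᵀ = R := by
    have := hR.1.eq
    rwa [Matrix.conjTranspose_eq_transpose_of_trivial] at this
  have hQsym : Qᵀ = Q := by
    have := hQ.1.eq
    rwa [Matrix.conjTranspose_eq_transpose_of_trivial] at this
  have hRunit : IsUnit R.det := (Matrix.isUnit_iff_isUnit_det R).mp hR.isUnit
  have hRinv : R⁻¹ * R = 1 := Matrix.nonsing_inv_mul R hRunit
  have hRinv2 : R * R⁻¹ = 1 := Matrix.mul_nonsing_inv R hRunit
  have hRinvT : (R⁻¹)ᵀ = R⁻¹ := by rw [Matrix.transpose_nonsing_inv, hRsym]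
  -- general formula : Aᵀ CS A = (R A)ᵀ (R A)
  have hgram : ∀ A : Matrix (Fin d) (Fin d) ℝ, Aᵀ * CS * A = (R * A)ᵀ * (R * A) := by
    intro A
    rw [Matrix.transpose_mul, hRsym, ← hRsq]
    simp only [Matrix.mul_assoc]
  -- Part one
  have hfullmin : frobSq ((R⁻¹ * Q)ᵀ * CS * (R⁻¹ * Q) - CT) = 0 := by
    have hRA : R * (R⁻¹ * Q) = Q := by rw [← Matrix.mul_assoc, hRinv2, Matrix.one_mul]
    rw [hgram, hRA, hQsym, hQsq, sub_self]
    simp [frobSq]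
  refine ⟨⟨⟨⟨R⁻¹ * Q, hfullmin.symm⟩, ?_⟩, hfullmin⟩, ?_⟩
  · rintro c ⟨A, rfl⟩
    exact frobSq_nonneg _
  -- Part two
  intro r hr Ar hAr
  set f : Fin d → ℝ := fun i => if (i : ℕ) < r then Real.sqrt (lam i) else 0 with hf
  set N : Matrix (Fin d) (Fin d) ℝ := UT * Matrix.diagonal f * UTᵀ with hN
  have hNsym : Nᵀ = N := by
    rw [hN]
    simp only [Matrix.transpose_mul, Matrix.transpose_transpose, Matrix.diagonal_transpose,
      Matrix.mul_assoc]
  have hRAr : R * Ar = N := by rw [hAr, ← Matrix.mul_assoc, hRinv2, Matrix.one_mul]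
  have hff : (fun i => f i * f i) = fun i : Fin d => if (i : ℕ) < r then lam i else 0 := by
    funext i
    by_cases h : (i : ℕ) < r
    · simp [hf, h, Real.mul_self_sqrt (hnonneg i)]
    · simp [hf, h]
  have hval : Arᵀ * CS * Ar - CT
      = UT * Matrix.diagonal (fun i : Fin d => (if (i : ℕ) < r then lam i else 0) - lam i)
        * UTᵀ := by
    rw [hgram, hRAr, hNsym, hN, conj_mul_conj UT hUT, hff, hTspec]
    rw [show Matrix.diagonal (fun i : Fin d => (if (i : ℕ) < r then lam i else 0) - lam i)
        = Matrix.diagonal (fun i : Fin d => if (i : ℕ) < r then lam i else 0)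
          - Matrix.diagonal lam from (Matrix.diagonal_sub _ _).symm]
    rw [Matrix.mul_sub, Matrix.sub_mul]
  have hvalnum : frobSq (Arᵀ * CS * Ar - CT)
      = ∑ i ∈ Finset.univ.filter (fun i : Fin d => r ≤ (i : ℕ)), (lam i) ^ 2 := by
    rw [hval, frobSq_conj _ _ hUT, frobSq_diagonal]
    have hterm : ∀ i : Fin d, ((if (i : ℕ) < r then lam i else 0) - lam i) ^ 2
        = if ¬ ((i : ℕ) < r) then lam i ^ 2 else 0 := by
      intro i
      by_cases h : (i : ℕ) < r
      · simp [h]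
      · simp [h, neg_sq]
    rw [Finset.sum_congr rfl fun i _ => hterm i, ← Finset.sum_filter]
    refine Finset.sum_congr (Finset.filter_congr fun i _ => ?_) fun _ _ => rfl
    simp [not_lt]
  have hrank : Ar.rank ≤ r := by
    rw [hAr]
    refine le_trans (Matrix.rank_mul_le_right _ _) ?_
    rw [hN, Matrix.mul_assoc]
    refine le_trans (Matrix.rank_mul_le_right _ _) ?_
    refine le_trans (Matrix.rank_mul_le_left _ _) ?_
    rw [Matrix.rank_diagonal, Fintype.card_subtype]
    refine le_trans (Finset.card_le_card ?_) (card_filter_lt_le r)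
    intro i hi
    rw [Finset.mem_filter] at hi ⊢
    refine ⟨Finset.mem_univ _, ?_⟩
    by_contra h
    exact hi.2 (by simp [hf, h])
  refine ⟨hrank, hvalnum, ⟨⟨Ar, hrank, hvalnum.symm⟩, ?_⟩⟩
  rintro c ⟨A, hArank, rfl⟩
  rw [hgram, hTspec]
  have hPSD : ((R * A)ᵀ * (R * A)).PosSemidef := by
    have := Matrix.posSemidef_conjTranspose_mul_self (R * A)
    rwa [Matrix.conjTranspose_eq_transpose_of_trivial] at this
  have hPrank : ((R * A)ᵀ * (R * A)).rank ≤ r := by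
    refine le_trans (Matrix.rank_mul_le_right _ _) ?_
    exact le_trans (Matrix.rank_mul_le_right _ _) hArank
  exact lower_bound UT lam hUT hdec hnonneg r _ hPSD hPrank
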